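/- arXiv:2302.05538 — 3 statements merged into one kernel-verified Lean document; each statement's English description precedes it below -/
import Mathlib

section
/- Let $p>1$, $\epsilon>0$, $b_\epsilon(t) = t(t^2+\epsilon)^{(p-2)/2}$. Then for all $c, t > 0$: $\min\{c, c^{p-1}\} \le \frac{b_\epsilon(ct)}{b_\epsilon(t)} \le \max\{c, c^{p-1}\}$. -/
theorem stmt_8 (p ε : ℝ) (hp : 1 < p) (hε : 0 < ε) :
    ∀ c t : ℝ, 0 < c → 0 < t →
      min c (c ^ (p - 1)) ≤
          ((c * t) * ((c * t) ^ 2 + ε) ^ ((p - 2) / 2)) /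
            (t * (t ^ 2 + ε) ^ ((p - 2) / 2)) ∧
        ((c * t) * ((c * t) ^ 2 + ε) ^ ((p - 2) / 2)) /
            (t * (t ^ 2 + ε) ^ ((p - 2) / 2)) ≤ max c (c ^ (p - 1)) := by
  intro c t hc ht
  set s := (p - 2) / 2 with hsdef
  have hB : (0:ℝ) < t ^ 2 + ε := by positivity
  have hA : (0:ℝ) < (c * t) ^ 2 + ε := by positivity
  have hBs : (0:ℝ) < (t ^ 2 + ε) ^ s := Real.rpow_pos_of_pos hB s
  have hR : ((c * t) * ((c * t) ^ 2 + ε) ^ s) / (t * (t ^ 2 + ε) ^ s)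
      = c * (((c * t) ^ 2 + ε) / (t ^ 2 + ε)) ^ s := by
    rw [Real.div_rpow hA.le hB.le]
    field_simp
  rw [hR]
  set r := ((c * t) ^ 2 + ε) / (t ^ 2 + ε) with hrdef
  have hr0 : 0 < r := div_pos hA hB
  have hc2 : c ^ (p - 2) = (c ^ 2 : ℝ) ^ s := by
    rw [← Real.rpow_natCast c 2, ← Real.rpow_mul hc.le]
    norm_num [hsdef]
    ring_nf
  have hcp : c ^ (p - 1) = c * c ^ (p - 2) := by
    rw [show p - 1 = 1 + (p - 2) by ring, Real.rpow_add hc, Real.rpow_one]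
  have hc2pos : (0:ℝ) < c ^ 2 := by positivity
  -- bounds on r
  have key : min 1 (c ^ (p - 2)) ≤ r ^ s ∧ r ^ s ≤ max 1 (c ^ (p - 2)) := by
    rcases le_total 1 c with h1 | h1
    · -- c ≥ 1 : 1 ≤ r ≤ c²
      have hcc : 1 ≤ c ^ 2 := by nlinarith
      have hr1 : 1 ≤ r := by
        rw [hrdef, le_div_iff₀ hB]
        nlinarith [mul_le_mul_of_nonneg_left hcc (sq_nonneg t)]
      have hr2 : r ≤ c ^ 2 := by
        rw [hrdef, div_le_iff₀ hB]
        nlinarith [mul_le_mul_of_nonneg_left hcc hε.le]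
      rcases le_total 0 s with hs | hs
      · have e1 : (1:ℝ) ≤ r ^ s := by
          simpa using Real.rpow_le_rpow (by norm_num) hr1 hs
        have e2 : r ^ s ≤ c ^ (p - 2) := by
          rw [hc2]; exact Real.rpow_le_rpow hr0.le hr2 hs
        exact ⟨le_trans (min_le_left _ _) e1, le_trans e2 (le_max_right _ _)⟩
      · have e1 : r ^ s ≤ 1 := by
          simpa using Real.rpow_le_rpow_of_nonpos one_pos hr1 hs
        have e2 : c ^ (p - 2) ≤ r ^ s := by
          rw [hc2]; exact Real.rpow_le_rpow_of_nonpos hr0 hr2 hs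
        exact ⟨le_trans (min_le_right _ _) e2, le_trans e1 (le_max_left _ _)⟩
    · -- c ≤ 1 : c² ≤ r ≤ 1
      have hcc : c ^ 2 ≤ 1 := by nlinarith
      have hr1 : r ≤ 1 := by
        rw [hrdef, div_le_one hB]
        nlinarith [mul_le_mul_of_nonneg_left hcc (sq_nonneg t)]
      have hr2 : c ^ 2 ≤ r := by
        rw [hrdef, le_div_iff₀ hB]
        nlinarith [mul_le_mul_of_nonneg_left hcc hε.le]
      rcases le_total 0 s with hs | hs
      · have e1 : r ^ s ≤ 1 := by
          simpa using Real.rpow_le_rpow hr0.le hr1 hs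
        have e2 : c ^ (p - 2) ≤ r ^ s := by
          rw [hc2]; exact Real.rpow_le_rpow hc2pos.le hr2 hs
        exact ⟨le_trans (min_le_right _ _) e2, le_trans e1 (le_max_left _ _)⟩
      · have e1 : (1:ℝ) ≤ r ^ s := by
          simpa using Real.rpow_le_rpow_of_nonpos hr0 hr1 hs
        have e2 : r ^ s ≤ c ^ (p - 2) := by
          rw [hc2]; exact Real.rpow_le_rpow_of_nonpos hc2pos hr2 hs
        exact ⟨le_trans (min_le_left _ _) e1, le_trans e2 (le_max_right _ _)⟩
  obtain ⟨k1, k2⟩ := key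
  constructor
  · calc min c (c ^ (p - 1)) = c * min 1 (c ^ (p - 2)) := by
          rw [mul_min_of_nonneg _ _ hc.le, mul_one, ← hcp]
       _ ≤ c * r ^ s := by
          exact mul_le_mul_of_nonneg_left k1 hc.le
  · calc c * r ^ s ≤ c * max 1 (c ^ (p - 2)) :=
          mul_le_mul_of_nonneg_left k2 hc.le
       _ = max c (c ^ (p - 1)) := by
          rw [mul_max_of_nonneg _ _ hc.le, mul_one, ← hcp]
end

section
/- Let $p>1$, $\epsilon>0$, $b_\epsilon(t) = t(t^2+\epsilon)^{(p-2)/2}$, and $B_\epsilon(t) = \int_0^t b_\epsilon(\tau)\,d\tau$. Then for all $t > 0$: $\min\{2,p\} \le \frac{t\, b_\epsilon(t)}{B_\epsilon(t)} \le \max\{2,p\}$. -/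
/-!
Integrating, $B_\epsilon(t) = (b^{p/2} - a^{p/2})/p$ with $a = \epsilon$, $b = t^2 + \epsilon$, while
$t\,b_\epsilon(t) = (b - a)\,b^{p/2-1}$. For $q > 0$ the difference $b^q - a^q$ equals
$(b-a)\,b^{q-1} + a\,(b^{q-1} - a^{q-1})$, and by the mean value theorem also $q\,c^{q-1}(b-a)$ for
some $c \in (a,b)$; monotonicity of $x \mapsto x^{q-1}$ therefore traps it between
$(b-a)\,b^{q-1}$ and $q\,(b-a)\,b^{q-1}$. With $q = p/2$ this is the claim.
-/

open Real Set

theorem hasDerivAt_rpow_sq_add_div {p ε : ℝ} (hp : p ≠ 0) (hε : 0 < ε) (τ : ℝ) :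
    HasDerivAt (fun x => (x ^ 2 + ε) ^ (p / 2) / p) (τ * (τ ^ 2 + ε) ^ ((p - 2) / 2)) τ := by
  have hbase : HasDerivAt (fun x : ℝ => x ^ 2 + ε) (2 * τ) τ := by
    simpa using (hasDerivAt_pow 2 τ).add_const ε
  have hpow := ((hasDerivAt_rpow_const (p := p / 2) (Or.inl (by positivity))).comp τ hbase).div_const p
  refine hpow.congr_deriv ?_
  rw [show p / 2 - 1 = (p - 2) / 2 by ring]
  field_simp

theorem integral_mul_rpow_sq_add {p ε : ℝ} (hp : p ≠ 0) (hε : 0 < ε) (t : ℝ) :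
    ∫ τ in (0:ℝ)..t, τ * (τ ^ 2 + ε) ^ ((p - 2) / 2) = ((t ^ 2 + ε) ^ (p / 2) - ε ^ (p / 2)) / p := by
  have hcont : Continuous fun τ : ℝ => τ * (τ ^ 2 + ε) ^ ((p - 2) / 2) :=
    continuous_id.mul <| (by fun_prop : Continuous fun τ : ℝ => τ ^ 2 + ε).rpow_const
      fun τ => Or.inl (by positivity)
  rw [intervalIntegral.integral_eq_sub_of_hasDerivAt (fun τ _ => hasDerivAt_rpow_sq_add_div hp hε τ)
    (hcont.intervalIntegrable 0 t)]
  rw [zero_pow two_ne_zero, zero_add, sub_div]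

section PowerDifference

variable {a b q : ℝ}

theorem exists_rpow_sub_rpow_eq (ha : 0 < a) (hab : a < b) :
    ∃ c ∈ Ioo a b, b ^ q - a ^ q = q * c ^ (q - 1) * (b - a) := by
  obtain ⟨c, hc, hslope⟩ := exists_hasDerivAt_eq_slope (fun x : ℝ => x ^ q)
    (fun x => q * x ^ (q - 1)) hab
    (fun x hx => (continuousAt_rpow_const x q (Or.inl (ha.trans_le hx.1).ne')).continuousWithinAt)
    (fun x hx => hasDerivAt_rpow_const (Or.inl (ha.trans hx.1).ne'))
  refine ⟨c, hc, ?_⟩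
  rw [hslope, div_mul_cancel₀ _ (sub_ne_zero.2 hab.ne')]

theorem rpow_sub_rpow_eq_sub_mul_rpow_add (ha : 0 < a) (hb : 0 < b) :
    b ^ q - a ^ q = (b - a) * b ^ (q - 1) + a * (b ^ (q - 1) - a ^ (q - 1)) := by
  have hb' : b ^ q = b * b ^ (q - 1) := by rw [mul_comm, ← rpow_add_one hb.ne']; ring_nf
  have ha' : a ^ q = a * a ^ (q - 1) := by rw [mul_comm, ← rpow_add_one ha.ne']; ring_nf
  rw [hb', ha']
  ring

theorem rpow_sub_rpow_mem_of_one_le (ha : 0 < a) (hab : a < b) (hq : 1 ≤ q) :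
    (b - a) * b ^ (q - 1) ≤ b ^ q - a ^ q ∧ b ^ q - a ^ q ≤ q * ((b - a) * b ^ (q - 1)) := by
  have hq1 : 0 ≤ q - 1 := by linarith
  obtain ⟨c, hc, hmvt⟩ := exists_rpow_sub_rpow_eq (q := q) ha hab
  constructor
  · have : a ^ (q - 1) ≤ b ^ (q - 1) := rpow_le_rpow ha.le hab.le hq1
    rw [rpow_sub_rpow_eq_sub_mul_rpow_add ha (ha.trans hab)]
    nlinarith
  · have : c ^ (q - 1) ≤ b ^ (q - 1) := rpow_le_rpow (ha.trans hc.1).le hc.2.le hq1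
    rw [hmvt, mul_assoc, mul_comm (c ^ _)]
    gcongr

theorem rpow_sub_rpow_mem_of_le_one (ha : 0 < a) (hab : a < b) (hq₀ : 0 < q) (hq : q ≤ 1) :
    q * ((b - a) * b ^ (q - 1)) ≤ b ^ q - a ^ q ∧ b ^ q - a ^ q ≤ (b - a) * b ^ (q - 1) := by
  have hq1 : q - 1 ≤ 0 := by linarith
  obtain ⟨c, hc, hmvt⟩ := exists_rpow_sub_rpow_eq (q := q) ha hab
  constructor
  · have : b ^ (q - 1) ≤ c ^ (q - 1) := rpow_le_rpow_of_nonpos (ha.trans hc.1) hc.2.le hq1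
    rw [hmvt, mul_assoc, mul_comm (c ^ _)]
    gcongr
  · have : b ^ (q - 1) ≤ a ^ (q - 1) := rpow_le_rpow_of_nonpos ha hab.le hq1
    rw [rpow_sub_rpow_eq_sub_mul_rpow_add ha (ha.trans hab)]
    nlinarith

end PowerDifference

theorem stmt_9 (p ε : ℝ) (hp : 1 < p) (hε : 0 < ε) :
    ∀ t : ℝ, 0 < t →
      min 2 p ≤
          t * (t * (t ^ 2 + ε) ^ ((p - 2) / 2)) /
            (∫ τ in (0:ℝ)..t, τ * (τ ^ 2 + ε) ^ ((p - 2) / 2)) ∧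
        t * (t * (t ^ 2 + ε) ^ ((p - 2) / 2)) /
            (∫ τ in (0:ℝ)..t, τ * (τ ^ 2 + ε) ^ ((p - 2) / 2)) ≤ max 2 p := by
  intro t ht
  have hp₀ : 0 < p := zero_lt_one.trans hp
  have hεb : ε < t ^ 2 + ε := by nlinarith
  have hnum : t * (t * (t ^ 2 + ε) ^ ((p - 2) / 2)) = (t ^ 2 + ε - ε) * (t ^ 2 + ε) ^ (p / 2 - 1) := by
    rw [show p / 2 - 1 = (p - 2) / 2 by ring]
    ring
  rw [hnum, integral_mul_rpow_sq_add hp₀.ne' hε]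
  set L := (t ^ 2 + ε - ε) * (t ^ 2 + ε) ^ (p / 2 - 1)
  set D := (t ^ 2 + ε) ^ (p / 2) - ε ^ (p / 2)
  have hD : 0 < D / p :=
    div_pos (sub_pos.2 (rpow_lt_rpow hε.le hεb (by positivity))) hp₀
  rw [le_div_iff₀ hD, div_le_iff₀ hD]
  rcases le_total 2 p with h2p | hp2
  · obtain ⟨hLD, hDL⟩ := rpow_sub_rpow_mem_of_one_le hε hεb (q := p / 2) (by linarith)
    rw [min_eq_left h2p, max_eq_right h2p]
    constructor
    · calc 2 * (D / p) ≤ 2 * (p / 2 * L / p) := by gcongr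
        _ = L := by field_simp
    · rw [mul_div_cancel₀ _ hp₀.ne']
      exact hLD
  · obtain ⟨hLD, hDL⟩ := rpow_sub_rpow_mem_of_le_one hε hεb (q := p / 2) (by positivity) (by linarith)
    rw [min_eq_right hp2, max_eq_left hp2]
    constructor
    · rw [mul_div_cancel₀ _ hp₀.ne']
      exact hDL
    · calc L = 2 * (p / 2 * L / p) := by field_simp
        _ ≤ 2 * (D / p) := by gcongr
end

section
/- Let $p>1$, $\epsilon>0$, $b_\epsilon(t) = t(t^2+\epsilon)^{(p-2)/2}$, and $B_\epsilon(t) = \int_0^t b_\epsilon(\tau)\,d\tau$. For every $c > 0$ and every $t > 0$, $m(c,p) \le \frac{t\, b_\epsilon(ct)}{B_\epsilon(t)} \le M(c,p)$, where $m(c,p) := \min\{2c, 2c^{p-1}, pc, pc^{p-1}\}$ and $M(c,p) := \max\{2c, 2c^{p-1}, pc, pc^{p-1}\}$. -/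
/-!
Write the ratio as `(t b(t) / B(t)) · (b(ct) / b(t))`. With `X = t² + ε`, the second factor is
`c · ((c²t² + ε)/X)^((p-2)/2)`, and `(c²t² + ε)/X` lies between `1` and `c²`, so the factor lies
between `c` and `c^(p-1)`. Since `B(t) = (X^(p/2) - ε^(p/2))/p`, the first factor is
`2 · q(1 - s)/(1 - s^q)` with `q = p/2`, `s = ε/X ∈ (0,1)`, and Bernoulli's inequality together
with the comparison of `s^q` and `s` puts `q(1 - s)/(1 - s^q)` between `1` and `q`. The product of
a number between `2` and `p` with one between `c` and `c^(p-1)` lies between the smallest and the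
largest of the four corner products.
-/

open Set

theorem Real.rpow_mem_uIcc_of_mem_uIcc {a b x : ℝ} (ha : 0 < a) (hb : 0 < b) (hx : x ∈ uIcc a b)
    (e : ℝ) : x ^ e ∈ uIcc (a ^ e) (b ^ e) := by
  have hpos : uIcc a b ⊆ Ioi 0 := fun y hy => (lt_min ha hb).trans_le hy.1
  rcases le_total 0 e with he | he
  · exact ((Real.monotoneOn_rpow_Ici_of_exponent_nonneg he).mono
      (hpos.trans Ioi_subset_Ici_self)).mapsTo_uIcc hx
  · exact ((Real.antitoneOn_rpow_Ioi_of_exponent_nonpos he).mono hpos).mapsTo_uIcc hx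

theorem mul_mem_Icc_of_mem_uIcc {a b c d x y : ℝ} (hx : x ∈ uIcc a b) (hy : y ∈ uIcc c d) :
    x * y ∈ Icc (min (min (a * c) (a * d)) (min (b * c) (b * d)))
      (max (max (a * c) (a * d)) (max (b * c) (b * d))) := by
  have hxy : x * y ∈ uIcc (a * y) (b * y) := by
    rw [← image_mul_const_uIcc]; exact mem_image_of_mem _ hx
  have hay : a * y ∈ uIcc (a * c) (a * d) := by
    rw [← image_const_mul_uIcc]; exact mem_image_of_mem _ hy
  have hby : b * y ∈ uIcc (b * c) (b * d) := by
    rw [← image_const_mul_uIcc]; exact mem_image_of_mem _ hy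
  refine uIcc_subset_Icc (uIcc_subset_Icc ?_ ?_ hay) (uIcc_subset_Icc ?_ ?_ hby) hxy <;>
    constructor <;> simp

theorem mul_one_sub_div_one_sub_rpow_mem_uIcc {s q : ℝ} (hs0 : 0 < s) (hs1 : s < 1) (hq : 0 < q) :
    q * (1 - s) / (1 - s ^ q) ∈ uIcc 1 q := by
  have hpos : 0 < 1 - s ^ q := sub_pos.2 (Real.rpow_lt_one hs0.le hs1 hq)
  have hs : -1 ≤ s - 1 := by linarith
  rcases le_total q 1 with hq1 | hq1
  · have hmono : s ≤ s ^ q := by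
      simpa using Real.rpow_le_rpow_of_exponent_ge hs0 hs1.le hq1
    have hbern := rpow_one_add_le_one_add_mul_self hs hq.le hq1
    rw [add_sub_cancel] at hbern
    rw [uIcc_of_ge hq1, mem_Icc, le_div_iff₀ hpos, div_le_iff₀ hpos]
    constructor <;> nlinarith
  · have hmono : s ^ q ≤ s := by
      simpa using Real.rpow_le_rpow_of_exponent_ge hs0 hs1.le hq1
    have hbern := one_add_mul_self_le_rpow_one_add hs hq1
    rw [add_sub_cancel] at hbern
    rw [uIcc_of_le hq1, mem_Icc, le_div_iff₀ hpos, div_le_iff₀ hpos]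
    constructor <;> nlinarith

noncomputable def bEps (p ε t : ℝ) : ℝ := t * (t ^ 2 + ε) ^ ((p - 2) / 2)

theorem integral_bEps {p ε : ℝ} (hp : p ≠ 0) (hε : 0 < ε) (t : ℝ) :
    ∫ τ in (0:ℝ)..t, bEps p ε τ = ((t ^ 2 + ε) ^ (p / 2) - ε ^ (p / 2)) / p := by
  have hderiv (x : ℝ) : HasDerivAt (fun x : ℝ => (x ^ 2 + ε) ^ (p / 2) / p) (bEps p ε x) x := by
    have hbase : HasDerivAt (fun x : ℝ => x ^ 2 + ε) (2 * x) x := by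
      simpa using (hasDerivAt_pow 2 x).add_const ε
    refine ((hbase.rpow_const (p := p / 2) (Or.inl (by positivity))).div_const p).congr_deriv ?_
    rw [bEps, show p / 2 - 1 = (p - 2) / 2 by ring]
    field_simp
  have hcont : Continuous (bEps p ε) :=
    continuous_id.mul (((continuous_pow 2).add continuous_const).rpow_const
      fun x => Or.inl (add_pos_of_nonneg_of_pos (sq_nonneg x) hε).ne')
  rw [intervalIntegral.integral_eq_sub_of_hasDerivAt (fun x _ => hderiv x)
    (hcont.intervalIntegrable 0 t)]
  norm_num
  ring

theorem bEps_mul_div_bEps_mem_uIcc (p : ℝ) {ε c t : ℝ} (hε : 0 < ε) (hc : 0 < c) (ht : 0 < t) :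
    bEps p ε (c * t) / bEps p ε t ∈ uIcc c (c ^ (p - 1)) := by
  have hX : 0 < t ^ 2 + ε := by positivity
  have hquot : ((c * t) ^ 2 + ε) / (t ^ 2 + ε) ∈ uIcc 1 (c ^ 2) := by
    rcases le_total (c ^ 2) 1 with hc1 | hc1
    · rw [uIcc_of_ge hc1, mem_Icc, le_div_iff₀ hX, div_le_iff₀ hX]
      constructor <;> nlinarith [mul_le_mul_of_nonneg_right hc1 (sq_nonneg t)]
    · rw [uIcc_of_le hc1, mem_Icc, le_div_iff₀ hX, div_le_iff₀ hX]
      constructor <;> nlinarith [mul_le_mul_of_nonneg_right hc1 (sq_nonneg t)]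
  have hpow := Real.rpow_mem_uIcc_of_mem_uIcc one_pos (by positivity) hquot ((p - 2) / 2)
  have hexp : c * (c ^ 2) ^ ((p - 2) / 2) = c ^ (p - 1) := by
    rw [show p - 1 = 1 + 2 * ((p - 2) / 2) by ring, Real.rpow_add hc, Real.rpow_one,
      Real.rpow_mul hc.le, Real.rpow_two]
  have hratio : bEps p ε (c * t) / bEps p ε t =
      c * (((c * t) ^ 2 + ε) / (t ^ 2 + ε)) ^ ((p - 2) / 2) := by
    rw [bEps, bEps, Real.div_rpow (by positivity) hX.le]
    field_simp
  have hscaled := mem_image_of_mem (c * ·) hpow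
  rwa [image_const_mul_uIcc, Real.one_rpow, mul_one, hexp, ← hratio] at hscaled

theorem mul_bEps_div_integral_mem_uIcc {p ε t : ℝ} (hp : 0 < p) (hε : 0 < ε) (ht : 0 < t) :
    t * bEps p ε t / ∫ τ in (0:ℝ)..t, bEps p ε τ ∈ uIcc 2 p := by
  have hX : 0 < t ^ 2 + ε := by positivity
  have hεX : ε < t ^ 2 + ε := lt_add_of_pos_left ε (by positivity)
  have hquot := mul_one_sub_div_one_sub_rpow_mem_uIcc (q := p / 2) (div_pos hε hX)
    ((div_lt_one hX).2 hεX) (by positivity)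
  have hratio : t * bEps p ε t / ∫ τ in (0:ℝ)..t, bEps p ε τ =
      2 * (p / 2 * (1 - ε / (t ^ 2 + ε)) / (1 - (ε / (t ^ 2 + ε)) ^ (p / 2))) := by
    rw [integral_bEps hp.ne' hε, bEps, Real.div_rpow hε.le hX.le,
      show (p - 2) / 2 = p / 2 - 1 by ring, Real.rpow_sub_one hX.ne']
    field_simp
    ring
  have hscaled := mem_image_of_mem (2 * ·) hquot
  rwa [image_const_mul_uIcc, mul_one, mul_div_cancel₀ p two_ne_zero, ← hratio] at hscaled

theorem stmt_10 (p ε : ℝ) (hp : 1 < p) (hε : 0 < ε) :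
    ∀ c t : ℝ, 0 < c → 0 < t →
      min (min (2 * c) (2 * c ^ (p - 1))) (min (p * c) (p * c ^ (p - 1))) ≤
          t * ((c * t) * ((c * t) ^ 2 + ε) ^ ((p - 2) / 2)) /
            (∫ τ in (0:ℝ)..t, τ * (τ ^ 2 + ε) ^ ((p - 2) / 2)) ∧
        t * ((c * t) * ((c * t) ^ 2 + ε) ^ ((p - 2) / 2)) /
            (∫ τ in (0:ℝ)..t, τ * (τ ^ 2 + ε) ^ ((p - 2) / 2)) ≤
          max (max (2 * c) (2 * c ^ (p - 1))) (max (p * c) (p * c ^ (p - 1))) := by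
  intro c t hc ht
  change t * bEps p ε (c * t) / ∫ τ in (0:ℝ)..t, bEps p ε τ ∈ Icc _ _
  have hb : bEps p ε t ≠ 0 := by unfold bEps; positivity
  rw [show t * bEps p ε (c * t) / ∫ τ in (0:ℝ)..t, bEps p ε τ =
      (t * bEps p ε t / ∫ τ in (0:ℝ)..t, bEps p ε τ) * (bEps p ε (c * t) / bEps p ε t) by
    field_simp]
  exact mul_mem_Icc_of_mem_uIcc (mul_bEps_div_integral_mem_uIcc (by linarith) hε ht)
    (bEps_mul_div_bEps_mem_uIcc p hε hc ht)
end
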